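/- arXiv:2403.16992 — 2 statements merged into one kernel-verified Lean document; each statement's English description precedes it below -/
import Mathlib

section
/- For any real scalars $x$ and $\eta > 0$, the Laplace density value $\frac{1}{2\eta}\exp(-|x|/\eta)$ equals the integral over $s \in (0,\infty)$ of the product of a centered Gaussian density in $x$ with variance $s$ and an exponential density in $s$ with rate $1/(2\eta^2)$: $\frac{1}{2\eta}e^{-|x|/\eta} = \int_0^\infty \frac{1}{\sqrt{2\pi s}}e^{-x^2/(2s)} \cdot \frac{1}{2\eta^2}e^{-s/(2\eta^2)}\,ds$. -/
/-!
Substituting `s = t ^ 2` turns the mixture integral into a multiple of the Glaisher integral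
`∫₀^∞ exp (-(a t² + b / t²)) dt` with `a = 1 / (2 η²)` and `b = x² / 2`. Completing the square,
`a t² + b / t² = (c t - d / t)² + 2 c d` with `c = √a`, `d = √b`, and the Cauchy–Schlömilch
substitution `u = c t - d / t`, a bijection `(0, ∞) → ℝ`, gives
`∫₀^∞ f (c t - d / t) dt = (2 c)⁻¹ ∫ f` for every even integrable `f`.
-/

open MeasureTheory Real Set

section ChangeOfVariables

variable {E : Type*} [NormedAddCommGroup E] [NormedSpace ℝ E]

theorem integral_comp_sq_Ioi (g : ℝ → E) :
    ∫ t in Ioi 0, (2 * t) • g (t ^ 2) = ∫ s in Ioi 0, g s := by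
  have himage : (fun t : ℝ ↦ t ^ 2) '' Ioi 0 = Ioi 0 := by
    ext s
    refine ⟨fun ⟨t, ht, hts⟩ ↦ hts ▸ pow_pos (mem_Ioi.1 ht) 2,
      fun hs ↦ ⟨√s, sqrt_pos.2 hs, sq_sqrt (le_of_lt hs)⟩⟩
  have := integral_image_eq_integral_deriv_smul_of_monotoneOn measurableSet_Ioi
    (fun t _ ↦ by simpa using (hasDerivAt_pow 2 t).hasDerivWithinAt)
    (fun s hs t _ hst ↦ pow_le_pow_left₀ (le_of_lt hs) hst 2) g
  rw [himage] at this
  exact this.symm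

theorem integral_comp_div_Ioi {k : ℝ} (hk : 0 < k) (g : ℝ → E) :
    ∫ t in Ioi 0, (k / t ^ 2) • g (k / t) = ∫ t in Ioi 0, g t := by
  have himage : (fun t : ℝ ↦ k / t) '' Ioi 0 = Ioi 0 := by
    ext s
    refine ⟨fun ⟨t, ht, hts⟩ ↦ hts ▸ div_pos hk ht, fun hs ↦ ⟨k / s, div_pos hk hs, ?_⟩⟩
    simp [div_div_cancel₀ hk.ne']
  have hderiv (t : ℝ) (ht : t ∈ Ioi 0) :
      HasDerivWithinAt (fun t ↦ k / t) (-(k / t ^ 2)) (Ioi 0) t := by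
    simpa [div_eq_mul_inv] using ((hasDerivAt_inv (ne_of_gt ht)).const_mul k).hasDerivWithinAt
  have := integral_image_eq_integral_deriv_smul_of_antitoneOn measurableSet_Ioi hderiv
    (fun s hs _ _ hst ↦ div_le_div_of_nonneg_left hk.le hs hst) g
  rw [himage] at this
  simpa using this.symm

variable {c d : ℝ}

theorem image_mul_sub_div_Ioi (hc : 0 < c) (hd : 0 < d) :
    (fun t ↦ c * t - d / t) '' Ioi 0 = univ := by
  refine eq_univ_of_forall fun y ↦ ?_
  -- the positive root of `c t ^ 2 - y t - d = 0`
  set r := √(y ^ 2 + 4 * (c * d))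
  have hr : r ^ 2 = y ^ 2 + 4 * (c * d) := sq_sqrt (by positivity)
  have hyr : 0 < y + r := by
    have : |y| < r := by
      rw [← sqrt_sq_eq_abs]
      exact sqrt_lt_sqrt (sq_nonneg y) (by nlinarith)
    linarith [neg_le_abs y]
  refine ⟨(y + r) / (2 * c), div_pos hyr (by positivity), ?_⟩
  field_simp
  linear_combination hr

theorem monotoneOn_mul_sub_div (hc : 0 ≤ c) (hd : 0 ≤ d) :
    MonotoneOn (fun t ↦ c * t - d / t) (Ioi 0) := fun _ hs _ _ hst ↦
  sub_le_sub (mul_le_mul_of_nonneg_left hst hc) (div_le_div_of_nonneg_left hd hs hst)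

theorem hasDerivAt_mul_sub_div {t : ℝ} (ht : t ≠ 0) :
    HasDerivAt (fun t ↦ c * t - d / t) (c + d / t ^ 2) t := by
  have := ((hasDerivAt_id' t).const_mul c).fun_sub ((hasDerivAt_inv ht).const_mul d)
  simpa [div_eq_mul_inv] using this

theorem integral_comp_mul_sub_div_Ioi (hc : 0 < c) (hd : 0 < d) (f : ℝ → E) :
    ∫ t in Ioi 0, (c + d / t ^ 2) • f (c * t - d / t) = ∫ u, f u := by
  have := integral_image_eq_integral_deriv_smul_of_monotoneOn measurableSet_Ioi
    (fun t ht ↦ (hasDerivAt_mul_sub_div (ne_of_gt ht)).hasDerivWithinAt)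
    (monotoneOn_mul_sub_div hc.le hd.le) f
  rw [image_mul_sub_div_Ioi hc hd, setIntegral_univ] at this
  exact this.symm

theorem integrableOn_comp_mul_sub_div_Ioi (hc : 0 < c) (hd : 0 < d) {f : ℝ → E}
    (hf : Integrable f) :
    IntegrableOn (fun t ↦ (c + d / t ^ 2) • f (c * t - d / t)) (Ioi 0) := by
  rw [← integrableOn_univ, ← image_mul_sub_div_Ioi hc hd] at hf
  exact (integrableOn_image_iff_integrableOn_deriv_smul_of_monotoneOn measurableSet_Ioi
    (fun t ht ↦ (hasDerivAt_mul_sub_div (ne_of_gt ht)).hasDerivWithinAt)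
    (monotoneOn_mul_sub_div hc.le hd.le) f).1 hf

theorem integral_comp_mul_sub_div_Ioi_of_even (hc : 0 < c) (hd : 0 < d) {f : ℝ → E}
    (hf : Integrable f) (heven : ∀ u, f (-u) = f u) :
    ∫ t in Ioi 0, f (c * t - d / t) = (2 * c)⁻¹ • ∫ u, f u := by
  set g := fun t ↦ f (c * t - d / t)
  have hweight (t : ℝ) : 0 < c + d / t ^ 2 := by positivity
  have hint := integrableOn_comp_mul_sub_div_Ioi hc hd hf
  have hint_c : IntegrableOn (fun t ↦ c • g t) (Ioi 0) := by
    have := hint.bdd_smul 1 (φ := fun t ↦ c / (c + d / t ^ 2))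
      (by fun_prop : Measurable fun t : ℝ ↦ c / (c + d / t ^ 2)).aestronglyMeasurable <|
      .of_forall fun t ↦ by
        rw [norm_of_nonneg (by positivity), div_le_one (hweight t)]
        linarith [hweight t, div_nonneg hd.le (sq_nonneg t)]
    refine IntegrableOn.congr_fun this (fun t _ ↦ ?_) measurableSet_Ioi
    simp [g, smul_smul, div_mul_cancel₀ c (hweight t).ne']
  have hint_d : IntegrableOn (fun t ↦ (d / t ^ 2) • g t) (Ioi 0) :=
    (hint.sub hint_c).congr_fun (fun t _ ↦ by simp [g, add_smul]) measurableSet_Ioi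
  -- `t ↦ (d / c) / t` swaps the two terms of the weight and maps `c t - d / t` to its negative
  have hswap : ∫ t in Ioi 0, (d / t ^ 2) • g t = ∫ t in Ioi 0, c • g t := by
    rw [← integral_comp_div_Ioi (div_pos hd hc)]
    refine setIntegral_congr_fun measurableSet_Ioi fun t ht ↦ ?_
    have ht : t ≠ 0 := ne_of_gt ht
    have harg : c * (d / c / t) - d / (d / c / t) = -(c * t - d / t) := by
      field_simp; ring
    simp only [g, smul_smul, harg, heven]
    congr 1
    field_simp
  rw [← integral_comp_mul_sub_div_Ioi hc hd, eq_inv_smul_iff₀ (by positivity)]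
  simp_rw [add_smul]
  rw [integral_add hint_c hint_d, hswap, integral_smul, two_mul, add_smul]

end ChangeOfVariables

theorem integral_exp_neg_mul_sq_add_div_sq_Ioi {a b : ℝ} (ha : 0 < a) (hb : 0 ≤ b) :
    ∫ t in Ioi 0, exp (-(a * t ^ 2 + b / t ^ 2)) = √(π / a) / 2 * exp (-2 * √(a * b)) := by
  rcases hb.eq_or_lt with rfl | hb
  · simpa using integral_gaussian_Ioi a
  set c := √a
  set d := √b
  have hc : 0 < c := sqrt_pos.2 ha
  have hd : 0 < d := sqrt_pos.2 hb
  have hcomplete (t : ℝ) (ht : t ∈ Ioi 0) :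
      exp (-(a * t ^ 2 + b / t ^ 2)) = exp (-2 * (c * d)) * exp (-(c * t - d / t) ^ 2) := by
    have ht : t ≠ 0 := ne_of_gt ht
    rw [← exp_add, ← sq_sqrt ha.le, ← sq_sqrt hb.le]
    congr 1
    field_simp
    ring
  have hgauss := integral_comp_mul_sub_div_Ioi_of_even hc hd (f := fun u ↦ exp (-u ^ 2))
    (by simpa using integrable_exp_neg_mul_sq one_pos) (by simp)
  rw [setIntegral_congr_fun measurableSet_Ioi hcomplete, integral_const_mul, hgauss,
    show √(a * b) = c * d from sqrt_mul ha.le b, show √(π / a) = √π / c from sqrt_div' _ ha.le]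
  simp only [smul_eq_mul]
  rw [show ∫ u, exp (-u ^ 2) = √π by simpa using integral_gaussian 1]
  field_simp

theorem laplace_scale_mixture (x η : ℝ) (hη : 0 < η) :
    (1 / (2 * η)) * Real.exp (-|x| / η) =
    ∫ s in Set.Ioi (0 : ℝ),
      (1 / Real.sqrt (2 * Real.pi * s)) * Real.exp (-x ^ 2 / (2 * s)) *
        ((1 / (2 * η ^ 2)) * Real.exp (-s / (2 * η ^ 2))) := by
  have hsubst (t : ℝ) (ht : t ∈ Ioi 0) :
      (2 * t) • ((1 / √(2 * π * t ^ 2)) * exp (-x ^ 2 / (2 * t ^ 2)) *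
        ((1 / (2 * η ^ 2)) * exp (-t ^ 2 / (2 * η ^ 2)))) =
      2 / √(2 * π) * (1 / (2 * η ^ 2)) *
        exp (-(1 / (2 * η ^ 2) * t ^ 2 + x ^ 2 / 2 / t ^ 2)) := by
    have ht : 0 < t := ht
    have hexp : exp (-(1 / (2 * η ^ 2) * t ^ 2 + x ^ 2 / 2 / t ^ 2)) =
        exp (-x ^ 2 / (2 * t ^ 2)) * exp (-t ^ 2 / (2 * η ^ 2)) := by
      rw [← exp_add]
      congr 1
      field_simp
      ring
    rw [sqrt_mul (by positivity), sqrt_sq ht.le, smul_eq_mul, hexp]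
    field_simp
  have hab : √(1 / (2 * η ^ 2) * (x ^ 2 / 2)) = |x| / (2 * η) := by
    rw [show 1 / (2 * η ^ 2) * (x ^ 2 / 2) = (|x| / (2 * η)) ^ 2 by rw [div_pow, sq_abs]; ring,
      sqrt_sq (by positivity)]
  have hpa : √(π / (1 / (2 * η ^ 2))) = √(2 * π) * η := by
    rw [show π / (1 / (2 * η ^ 2)) = 2 * π * η ^ 2 by rw [one_div, div_inv_eq_mul]; ring,
      sqrt_mul (by positivity), sqrt_sq hη.le]
  rw [← integral_comp_sq_Ioi, setIntegral_congr_fun measurableSet_Ioi hsubst, integral_const_mul,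
    integral_exp_neg_mul_sq_add_div_sq_Ioi (by positivity) (by positivity), hab, hpa]
  field_simp
end

section
/- Let $F \in \mathbb{C}^{n\times n}$ be unitary, $g \in \mathbb{R}^n$, $y \in \mathbb{C}^n$, $\sigma > 0$, and set $F_2 = F D(g)$. Write $F_2^H y$ componentwise as $q_j e^{i\varphi_j}$ with $q_j \ge 0$. Then for every $\phi \in [-\pi,\pi)^n$, $\exp\left(-\frac{1}{\sigma^2}\|y - F_2 e^{i\phi}\|_2^2\right) = \exp\left(-\frac{1}{\sigma^2}(g^Tg + \|y\|_2^2)\right)\prod_{j=1}^n \exp\left(\frac{2q_j}{\sigma^2}\cos(\phi_j - \varphi_j)\right)$. In particular, the normalized density of $\phi$ proportional to $\exp(-\frac{1}{\sigma^2}\|y - F_2 e^{i\phi}\|_2^2)$ on $[-\pi,\pi)^n$ factors as the product $\prod_{j=1}^n f_{vM}(\phi_j \mid \varphi_j, \frac{2}{\sigma^2}q_j)$ of von Mises densities. -/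
open Matrix MeasureTheory

noncomputable def besselI0 (κ : ℝ) : ℝ :=
  (1 / Real.pi) * ∫ θ in (0 : ℝ)..Real.pi, Real.exp (κ * Real.cos θ)

noncomputable def vonMisesDensity (x μ κ : ℝ) : ℝ :=
  Real.exp (κ * Real.cos (x - μ)) / (2 * Real.pi * besselI0 κ)

/-!
Expand `‖y - F₂ e^{iφ}‖²`. Since `F` is unitary and `|e^{iφ_j}| = 1`, the quadratic term is
`‖D(g) e^{iφ}‖² = ∑ g_j²`, and the cross term is `Re ⟪F₂ᴴ y, e^{iφ}⟫ = ∑ q_j cos (φ_j - φv_j)`.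
So the unnormalised density is a constant times a product of one-variable factors, and by Fubini
its integral over the box is the product of the integrals `∫_{-π}^{π} e^{κ cos (x - μ)} dx`, each
equal to `2π I₀(κ)` independently of `μ` by periodicity and evenness of `cos`.
-/

open Real

theorem Function.Periodic.setIntegral_Ico_comp_sub {E : Type*} [NormedAddCommGroup E]
    [NormedSpace ℝ E] {f : ℝ → E} {T : ℝ} (hf : Function.Periodic f T) (hT : 0 ≤ T)
    (a μ : ℝ) : ∫ x in Set.Ico a (a + T), f (x - μ) = ∫ x in a..a + T, f x := by
  rw [integral_Ico_eq_integral_Ioo, ← integral_Ioc_eq_integral_Ioo,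
    ← intervalIntegral.integral_of_le (by linarith), intervalIntegral.integral_comp_sub_right,
    add_sub_right_comm, hf.intervalIntegral_add_eq (a - μ) a]

theorem intervalIntegral_exp_mul_cos (κ : ℝ) :
    ∫ x in -π..π, exp (κ * cos x) = 2 * π * besselI0 κ := by
  have hint (a b : ℝ) : IntervalIntegrable (fun x => exp (κ * cos x)) volume a b :=
    (by fun_prop : Continuous fun x => exp (κ * cos x)).intervalIntegrable a b
  have heven : ∫ x in -π..0, exp (κ * cos x) = ∫ x in 0..π, exp (κ * cos x) := by
    simpa using (intervalIntegral.integral_comp_neg (a := 0) (b := π)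
      (fun x => exp (κ * cos x))).symm
  rw [← intervalIntegral.integral_add_adjacent_intervals (hint _ 0) (hint 0 _), heven, besselI0]
  field_simp
  ring

theorem setIntegral_Ico_exp_mul_cos_sub (κ μ : ℝ) :
    ∫ x in Set.Ico (-π) π, exp (κ * cos (x - μ)) = 2 * π * besselI0 κ := by
  have hper : Function.Periodic (fun x => exp (κ * cos x)) (2 * π) := fun x => by
    simp only [cos_add_two_pi]
  have := hper.setIntegral_Ico_comp_sub (by positivity) (-π) μ
  rw [show -π + 2 * π = π by ring] at this
  rw [this, intervalIntegral_exp_mul_cos]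

theorem setIntegral_univ_pi_prod {ι 𝕜 : Type*} [Fintype ι] [RCLike 𝕜] {E : ι → Type*}
    [∀ i, MeasureSpace (E i)] [∀ i, SigmaFinite (volume : Measure (E i))]
    (s : (i : ι) → Set (E i)) (f : (i : ι) → E i → 𝕜) :
    ∫ x in Set.univ.pi s, ∏ i, f i (x i) = ∏ i, ∫ x in s i, f i x := by
  rw [volume_pi, Measure.restrict_pi_pi, integral_fintype_prod_eq_prod]

section Quadratic

variable {ι 𝕜 : Type*} [Fintype ι] [RCLike 𝕜]

theorem sum_sq_norm_sub (y m : ι → 𝕜) :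
    ∑ j, ‖y j - m j‖ ^ 2 = ∑ j, ‖y j‖ ^ 2 + ∑ j, ‖m j‖ ^ 2 - 2 * RCLike.re (star y ⬝ᵥ m) := by
  simp only [norm_sub_sq (𝕜 := 𝕜), RCLike.inner_apply, dotProduct, Pi.star_apply,
    RCLike.star_def, map_sum, Finset.sum_add_distrib, Finset.sum_sub_distrib, Finset.mul_sum,
    mul_comm]
  ring

theorem ofReal_sum_sq_norm (v : ι → 𝕜) : ((∑ j, ‖v j‖ ^ 2 : ℝ) : 𝕜) = star v ⬝ᵥ v := by
  simp [dotProduct, RCLike.star_def, RCLike.conj_mul]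

theorem sum_sq_norm_mulVec_of_mem_unitaryGroup [DecidableEq ι] {U : Matrix ι ι 𝕜}
    (hU : U ∈ unitaryGroup ι 𝕜) (v : ι → 𝕜) : ∑ j, ‖(U *ᵥ v) j‖ ^ 2 = ∑ j, ‖v j‖ ^ 2 := by
  have hUU : Uᴴ * U = 1 := mem_unitaryGroup_iff'.mp hU
  apply RCLike.ofReal_injective (K := 𝕜)
  rw [ofReal_sum_sq_norm, ofReal_sum_sq_norm, star_mulVec, dotProduct_mulVec, vecMul_vecMul, hUU,
    vecMul_one]

end Quadratic

theorem Complex.re_star_mul_exp_mul_I (q a b : ℝ) :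
    (star ((q : ℂ) * Complex.exp (Complex.I * a)) * Complex.exp (Complex.I * b)).re
      = q * Real.cos (b - a) := by
  rw [Complex.star_def, map_mul, Complex.conj_ofReal, ← Complex.exp_conj, map_mul,
    Complex.conj_I, Complex.conj_ofReal, mul_assoc, ← Complex.exp_add,
    show -Complex.I * a + Complex.I * b = ((b - a : ℝ) : ℂ) * Complex.I by push_cast; ring,
    Complex.re_ofReal_mul, Complex.exp_ofReal_mul_I_re]

theorem sum_sq_norm_sub_mulVec_diagonal_exp {ι : Type*} [Fintype ι] [DecidableEq ι]
    {F : Matrix ι ι ℂ} (hF : F ∈ unitaryGroup ι ℂ) (g : ι → ℝ) (y : ι → ℂ) {q φv : ι → ℝ}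
    (hqφ : ∀ j, ((F * diagonal (fun j => (g j : ℂ)))ᴴ *ᵥ y) j
      = (q j : ℂ) * Complex.exp (Complex.I * (φv j : ℂ)))
    (φ : ι → ℝ) :
    ∑ j, ‖y j - ((F * diagonal (fun j => (g j : ℂ))) *ᵥ
        (fun i => Complex.exp (Complex.I * (φ i : ℂ)))) j‖ ^ 2
      = ((∑ j, g j ^ 2) + ∑ j, ‖y j‖ ^ 2) - 2 * ∑ j, q j * cos (φ j - φv j) := by
  set e : ι → ℂ := fun i => Complex.exp (Complex.I * (φ i : ℂ))
  have hsignal : ∑ j, ‖((F * diagonal (fun j => (g j : ℂ))) *ᵥ e) j‖ ^ 2 = ∑ j, g j ^ 2 := by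
    rw [← mulVec_mulVec, sum_sq_norm_mulVec_of_mem_unitaryGroup hF]
    simp [e, mulVec_diagonal, mul_comm Complex.I, Complex.norm_exp_ofReal_mul_I]
  have hcross : star y ⬝ᵥ ((F * diagonal (fun j => (g j : ℂ))) *ᵥ e)
      = star ((F * diagonal (fun j => (g j : ℂ)))ᴴ *ᵥ y) ⬝ᵥ e := by
    rw [dotProduct_mulVec, star_mulVec, conjTranspose_conjTranspose]
  rw [sum_sq_norm_sub, hsignal, hcross, RCLike.re_to_complex, dotProduct, Complex.re_sum]
  simp only [Pi.star_apply, hqφ, e, Complex.re_star_mul_exp_mul_I]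
  ring

theorem phase_posterior_vonMises_product_general (n : ℕ) (F : Matrix (Fin n) (Fin n) ℂ)
    (hF : F ∈ Matrix.unitaryGroup (Fin n) ℂ) (g : Fin n → ℝ) (y : Fin n → ℂ)
    (σ : ℝ)
    (F₂ : Matrix (Fin n) (Fin n) ℂ)
    (hF₂ : F₂ = F * Matrix.diagonal (fun j => (g j : ℂ)))
    (q φv : Fin n → ℝ)
    (hqφ : ∀ j, F₂ᴴ.mulVec y j = (q j : ℂ) * Complex.exp (Complex.I * (φv j : ℂ))) :
    ∀ φ : Fin n → ℝ, (∀ j, φ j ∈ Set.Ico (-Real.pi) Real.pi) →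
      (Real.exp (-(1 / σ ^ 2) *
          ∑ j, ‖y j - F₂.mulVec (fun i => Complex.exp (Complex.I * (φ i : ℂ))) j‖ ^ 2)
        = Real.exp (-(1 / σ ^ 2) * ((∑ j, g j ^ 2) + ∑ j, ‖y j‖ ^ 2)) *
          ∏ j, Real.exp ((2 * q j / σ ^ 2) * Real.cos (φ j - φv j))) ∧
      (Real.exp (-(1 / σ ^ 2) *
          ∑ j, ‖y j - F₂.mulVec (fun i => Complex.exp (Complex.I * (φ i : ℂ))) j‖ ^ 2) /
        (∫ ψ in Set.univ.pi (fun _ : Fin n => Set.Ico (-Real.pi) Real.pi),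
          Real.exp (-(1 / σ ^ 2) *
            ∑ j, ‖y j - F₂.mulVec (fun i => Complex.exp (Complex.I * (ψ i : ℂ))) j‖ ^ 2))
        = ∏ j, vonMisesDensity (φ j) (φv j) (2 * q j / σ ^ 2)) := by
  subst hF₂
  have hfactor (ψ : Fin n → ℝ) :
      exp (-(1 / σ ^ 2) * ∑ j, ‖y j - ((F * diagonal (fun j => (g j : ℂ))) *ᵥ
          (fun i => Complex.exp (Complex.I * (ψ i : ℂ)))) j‖ ^ 2)
        = exp (-(1 / σ ^ 2) * ((∑ j, g j ^ 2) + ∑ j, ‖y j‖ ^ 2)) *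
          ∏ j, exp ((2 * q j / σ ^ 2) * cos (ψ j - φv j)) := by
    have hsum : ∑ j, 2 * q j / σ ^ 2 * cos (ψ j - φv j)
        = 2 / σ ^ 2 * ∑ j, q j * cos (ψ j - φv j) := by
      rw [Finset.mul_sum]
      exact Finset.sum_congr rfl fun j _ => by ring
    rw [sum_sq_norm_sub_mulVec_diagonal_exp hF g y hqφ, ← exp_sum, ← exp_add, hsum]
    congr 1
    ring
  intro φ _
  refine ⟨hfactor φ, ?_⟩
  simp_rw [hfactor]
  rw [integral_const_mul,
    setIntegral_univ_pi_prod _ fun j t => exp (2 * q j / σ ^ 2 * cos (t - φv j)),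
    mul_div_mul_left _ _ (exp_pos _).ne', ← Finset.prod_div_distrib]
  simp only [setIntegral_Ico_exp_mul_cos_sub, vonMisesDensity]

theorem phase_posterior_vonMises_product (n : ℕ) (F : Matrix (Fin n) (Fin n) ℂ)
    (hF : F ∈ Matrix.unitaryGroup (Fin n) ℂ) (g : Fin n → ℝ) (y : Fin n → ℂ)
    (σ : ℝ) (hσ : 0 < σ)
    (F₂ : Matrix (Fin n) (Fin n) ℂ)
    (hF₂ : F₂ = F * Matrix.diagonal (fun j => (g j : ℂ)))
    (q φv : Fin n → ℝ) (hq : ∀ j, 0 ≤ q j)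
    (hqφ : ∀ j, F₂ᴴ.mulVec y j = (q j : ℂ) * Complex.exp (Complex.I * (φv j : ℂ))) :
    ∀ φ : Fin n → ℝ, (∀ j, φ j ∈ Set.Ico (-Real.pi) Real.pi) →
      (Real.exp (-(1 / σ ^ 2) *
          ∑ j, ‖y j - F₂.mulVec (fun i => Complex.exp (Complex.I * (φ i : ℂ))) j‖ ^ 2)
        = Real.exp (-(1 / σ ^ 2) * ((∑ j, g j ^ 2) + ∑ j, ‖y j‖ ^ 2)) *
          ∏ j, Real.exp ((2 * q j / σ ^ 2) * Real.cos (φ j - φv j))) ∧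
      (Real.exp (-(1 / σ ^ 2) *
          ∑ j, ‖y j - F₂.mulVec (fun i => Complex.exp (Complex.I * (φ i : ℂ))) j‖ ^ 2) /
        (∫ ψ in Set.univ.pi (fun _ : Fin n => Set.Ico (-Real.pi) Real.pi),
          Real.exp (-(1 / σ ^ 2) *
            ∑ j, ‖y j - F₂.mulVec (fun i => Complex.exp (Complex.I * (ψ i : ℂ))) j‖ ^ 2))
        = ∏ j, vonMisesDensity (φ j) (φv j) (2 * q j / σ ^ 2)) :=
  phase_posterior_vonMises_product_general n F hF g y σ F₂ hF₂ q φv hqφ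
end
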